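/- Let F be an algebraically closed field of characteristic p > 0 and P a non-abelian finite p-group. Then the Jacobson radical of the center of FP satisfies J(Z(FP)) ⊆ J(F[P'Z(P)]) · FP, where P'Z(P) is the (normal) subgroup generated by the derived subgroup P' and the center Z(P). Consequently LL(Z(FP)) ≤ LL(F[P'Z(P)]). -/

import Mathlib

set_option synthInstance.maxHeartbeats 1000000
set_option maxHeartbeats 1000000

/-- The Jacobson radical of an `F`-algebra `A`, viewed as an `F`-submodule. -/
noncomputable def jacRad (F A : Type*) [CommSemiring F] [Ring A] [Algebra F A] : Submodule F A :=
  Submodule.restrictScalars F (Ideal.jacobson (⊥ : Ideal A))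

/-- The Loewy length of an `F`-algebra `A`: the least `l > 0` with `(J A) ^ l = 0`. -/
noncomputable def LL (F A : Type*) [CommSemiring F] [Ring A] [Algebra F A] : ℕ :=
  sInf {l : ℕ | 0 < l ∧ jacRad F A ^ l = ⊥}

/-!
A `p`-group fixes a nonzero vector of any nonzero module of characteristic `p` (count fixed
points in the `𝔽_p`-span of an orbit); in a simple `FG`-module the fixed vectors form a nonzero
submodule, so `G` acts trivially and every `g - 1` lies in `J(FG)`. Hence the span `I` of the
`n - 1`, `n ∈ N`, lies in `J(FN)`.

A central element `x` of `FP` has coefficients constant on conjugacy classes. If `K` is the class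
of `r` and `g ∈ K`, then `g r⁻¹ ∈ P' ⊆ N`, so `g ≡ r` modulo `I·FP`, and
`Σ_{g ∈ K} (g - 1) ≡ |K| (r - 1)`. This is `0` when `r` is not central (`p ∣ |K|`) and lies in
`I` when `r ∈ Z(P) ⊆ N`. Writing `x = Σ_g x_g (g - 1)` when its augmentation vanishes, which is
the case on `J(Z(FP))`, gives `x ∈ I·FP`. Since `N` is normal, `FP·I ⊆ I·FP`, so
`(I·FP)^l ⊆ I^l·FP`, which vanishes for `l = LL(FN)`.
-/

theorem IsPGroup.exists_fixed_ne_zero {p : ℕ} [Fact p.Prime] {G M : Type*} [Group G] [Finite G]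
    (hG : IsPGroup p G) [AddCommGroup M] [Module (ZMod p) M] [DistribMulAction G M]
    {v : M} (hv : v ≠ 0) : ∃ w ≠ (0 : M), ∀ g : G, g • w = w := by
  let V : Submodule (ZMod p) M := Submodule.span (ZMod p) (Set.range fun g : G => g • v)
  have hV : ∀ (g : G) (w : M), w ∈ V → g • w ∈ V := by
    intro g w hw
    induction hw using Submodule.span_induction with
    | mem x hx =>
      obtain ⟨h, rfl⟩ := hx
      exact Submodule.subset_span ⟨g * h, mul_smul g h v⟩
    | zero => simp
    | add x y _ _ hx hy => simpa using V.add_mem hx hy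
    | smul c x _ hx =>
      obtain ⟨n, rfl⟩ := ZMod.natCast_zmod_surjective c
      simpa [Nat.cast_smul_eq_nsmul, smul_comm g n x] using V.smul_mem (n : ZMod p) hx
  let S : SubMulAction G M := ⟨V, fun g _ hw => hV g _ hw⟩
  have : Module.Finite (ZMod p) V := Module.Finite.span_of_finite _ (Set.finite_range _)
  have : Finite V := Module.finite_of_finite (ZMod p)
  have : Fintype V := Fintype.ofFinite V
  have : Nontrivial V :=
    ⟨⟨v, Submodule.subset_span ⟨1, one_smul G v⟩⟩, 0, fun h => hv (congrArg Subtype.val h)⟩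
  have hcard : p ∣ Nat.card S := by
    change p ∣ Nat.card V
    rw [Nat.card_eq_fintype_card, Module.card_eq_pow_finrank (K := ZMod p), ZMod.card]
    exact dvd_pow_self p Module.finrank_pos.ne'
  obtain ⟨w, hw, hw0⟩ := hG.exists_fixed_point_of_prime_dvd_card_of_fixed_point S hcard
    (a := ⟨0, V.zero_mem⟩) (fun g => Subtype.ext (smul_zero g))
  exact ⟨w, fun h => hw0 (Subtype.ext h.symm), fun g => congrArg Subtype.val (hw g)⟩

theorem IsPGroup.prime_dvd_card_conjClass {p : ℕ} [Fact p.Prime] {G : Type*} [Group G]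
    [Finite G] (hG : IsPGroup p G) {r : G} (hr : r ∉ Subgroup.center G) :
    p ∣ Nat.card (ConjClasses.mk r).carrier := by
  obtain ⟨n, hn⟩ := (hG.of_equiv ConjAct.toConjAct).card_orbit r
  rw [ConjAct.orbit_eq_carrier_conjClasses] at hn
  rcases n with _ | n
  · refine absurd (Subgroup.mem_center_iff.2 fun c => ?_) hr
    have := (Nat.card_eq_one_iff_unique.1 hn).1
    have hc : c * r * c⁻¹ ∈ (ConjClasses.mk r).carrier :=
      ConjClasses.mem_carrier_iff_mk_eq.2
        (ConjClasses.mk_eq_mk_iff_isConj.2 (isConj_iff.2 ⟨c⁻¹, by group⟩))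
    have hcr := Subsingleton.elim (⟨_, hc⟩ : (ConjClasses.mk r).carrier)
      ⟨r, ConjClasses.mem_carrier_mk⟩
    exact mul_inv_eq_iff_eq_mul.1 (congrArg Subtype.val hcr)
  · exact hn ▸ dvd_pow_self p n.succ_ne_zero

theorem Submodule.mul_top_pow_le {R A : Type*} [CommSemiring R] [Semiring A] [Algebra R A]
    {M : Submodule R A} (h : ⊤ * M ≤ M * ⊤) (k : ℕ) :
    (M * ⊤) ^ (k + 1) ≤ M ^ (k + 1) * ⊤ := by
  induction k with
  | zero => rw [zero_add, pow_one, pow_one]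
  | succ k ih =>
    calc (M * ⊤) ^ (k + 2) = (M * ⊤) ^ (k + 1) * (M * ⊤) := pow_succ _ _
      _ ≤ M ^ (k + 1) * ⊤ * (M * ⊤) := mul_le_mul' ih le_rfl
      _ = M ^ (k + 1) * (⊤ * M) * ⊤ := by simp only [mul_assoc]
      _ ≤ M ^ (k + 1) * (M * ⊤) * ⊤ := by gcongr
      _ = M ^ (k + 2) * (⊤ * ⊤) := by rw [pow_succ _ (k + 1)]; simp only [mul_assoc]
      _ ≤ M ^ (k + 2) * ⊤ := by gcongr; exact le_top

theorem AlgHom.apply_eq_zero_of_mem_jacRad {F B : Type*} [Field F] [Ring B] [Algebra F B]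
    (ψ : B →ₐ[F] F) {x : B} (hx : x ∈ jacRad F B) : ψ x = 0 :=
  have hψ : Function.Surjective ψ := fun c => ⟨algebraMap F B c, ψ.commutes c⟩
  (sInf_le ⟨bot_le, RingHom.ker_isMaximal_of_surjective ψ hψ⟩ : Ideal.jacobson ⊥ ≤ _) hx

theorem exists_jacRad_pow_eq_bot (F A : Type*) [Field F] [Ring A] [Algebra F A]
    [FiniteDimensional F A] : ∃ l, 0 < l ∧ jacRad F A ^ l = ⊥ := by
  have := IsArtinianRing.of_finite F A
  obtain ⟨n, hn⟩ := IsArtinianRing.isNilpotent_jacobson_bot (R := A)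
  have hpow : ∀ k : ℕ,
      jacRad F A ^ (k + 1) = ((Ideal.jacobson ⊥ : Ideal A) ^ (k + 1)).restrictScalars F := by
    intro k
    induction k with
    | zero => rw [zero_add, pow_one, Submodule.pow_one]; rfl
    | succ k ih =>
      rw [pow_succ, ih, Submodule.pow_succ (n := k + 1), Submodule.restrictScalars_mul]; rfl
  refine ⟨n + 1, n.succ_pos, ?_⟩
  rw [hpow, Submodule.pow_succ, hn, zero_mul, Submodule.zero_eq_bot,
    Submodule.restrictScalars_bot]

theorem LL_spec (F A : Type*) [Field F] [Ring A] [Algebra F A] [FiniteDimensional F A] :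
    0 < LL F A ∧ jacRad F A ^ LL F A = ⊥ :=
  Nat.sInf_mem (exists_jacRad_pow_eq_bot F A)

namespace MonoidAlgebra

variable {F G : Type*} [Field F] [Group G]

theorem of_smul_eq_self_of_isSimpleModule {p : ℕ} [Fact p.Prime] [CharP F p] [Finite G]
    (hG : IsPGroup p G) {S : Type*} [AddCommGroup S] [Module (MonoidAlgebra F G) S]
    [IsSimpleModule (MonoidAlgebra F G) S] (g : G) (s : S) : of F G g • s = s := by
  let W : Submodule (MonoidAlgebra F G) S :=
    { carrier := {t | ∀ x : G, of F G x • t = t}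
      add_mem' := fun ht ht' x => by rw [smul_add, ht x, ht' x]
      zero_mem' := fun x => smul_zero _
      smul_mem' := fun a t ht x => by
        induction a using MonoidAlgebra.induction_linear with
        | zero => rw [zero_smul, smul_zero]
        | add a b ha hb => rw [add_smul, smul_add, ha, hb]
        | single y c =>
          rw [← mul_smul, single_eq_algebraMap_mul_of, ← mul_assoc, ← Algebra.commutes,
            mul_assoc, ← map_mul, mul_smul, mul_smul, ht, ht] }
  let _ : DistribMulAction G S := DistribMulAction.compHom S (of F G)
  let _ : Module (ZMod p) S :=
    Module.compHom S ((algebraMap F (MonoidAlgebra F G)).comp (ZMod.castHom dvd_rfl F))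
  have := IsSimpleModule.nontrivial (MonoidAlgebra F G) S
  obtain ⟨v, hv⟩ := exists_ne (0 : S)
  obtain ⟨w, hw0, hw⟩ := hG.exists_fixed_ne_zero hv
  have hW : W = ⊤ :=
    (eq_bot_or_eq_top W).resolve_left fun h => hw0 ((Submodule.eq_bot_iff W).1 h w hw)
  exact (hW ▸ Submodule.mem_top : s ∈ W) g

theorem of_sub_one_mem_jacobson {p : ℕ} [Fact p.Prime] [CharP F p] [Finite G]
    (hG : IsPGroup p G) (g : G) :
    of F G g - 1 ∈ Ideal.jacobson (⊥ : Ideal (MonoidAlgebra F G)) := by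
  refine Ideal.mem_sInf.2 fun m ⟨_, hm⟩ => ?_
  have := (isSimpleModule_iff_isCoatom (R := MonoidAlgebra F G)).2 (Ideal.isMaximal_def.1 hm)
  have h := of_smul_eq_self_of_isSimpleModule (F := F) hG g
    (Submodule.Quotient.mk 1 : MonoidAlgebra F G ⧸ m)
  rwa [← Submodule.Quotient.mk_smul, smul_eq_mul, mul_one, Submodule.Quotient.eq] at h

variable (F G) in
noncomputable def augmentation : MonoidAlgebra F G →ₐ[F] F := lift F F G 1

theorem sub_algebraMap_augmentation_eq_sum [Fintype G] (x : MonoidAlgebra F G) :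
    x - algebraMap F _ (augmentation F G x) = ∑ g, x.coeff g • (of F G g - 1) := by
  classical
  induction x using MonoidAlgebra.induction_linear with
  | zero => simp
  | add x y hx hy =>
    simp only [map_add, coeff_add, Finsupp.add_apply, add_smul, Finset.sum_add_distrib, ← hx,
      ← hy]
    abel
  | single h c =>
    simp [augmentation, Finsupp.single_apply, smul_sub, one_def]

theorem coeff_eq_of_isConj_of_mem_center {x : MonoidAlgebra F G}
    (hx : x ∈ Subalgebra.center F (MonoidAlgebra F G)) {g h : G} (hgh : IsConj g h) :
    x.coeff g = x.coeff h := by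
  obtain ⟨c, rfl⟩ := isConj_iff.1 hgh
  have := congrArg (fun y => y.coeff (c * g)) (Subalgebra.mem_center_iff.1 hx (single c 1))
  simpa [coeff_single_mul_apply, coeff_mul_single_apply] using this

variable (F) in
/-- The augmentation ideal of `F[N]`, as a subspace of `F[G]`. -/
noncomputable def subgroupAugmentation (N : Subgroup G) : Submodule F (MonoidAlgebra F G) :=
  Submodule.span F (Set.range fun n : N => of F G n - 1)

theorem of_sub_of_mem_subgroupAugmentation_mul_top {N : Subgroup G} {g h : G}
    (hgh : g * h⁻¹ ∈ N) : of F G g - of F G h ∈ subgroupAugmentation F N * ⊤ := by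
  have : of F G g - of F G h = (of F G (g * h⁻¹) - 1) * of F G h := by
    rw [sub_mul, one_mul, ← map_mul, inv_mul_cancel_right]
  exact this ▸ Submodule.mul_mem_mul (Submodule.subset_span ⟨⟨_, hgh⟩, rfl⟩) Submodule.mem_top

theorem top_mul_subgroupAugmentation_le {N : Subgroup G} (hN : N.Normal) :
    ⊤ * subgroupAugmentation F N ≤ subgroupAugmentation F N * ⊤ := by
  suffices h : ∀ (a : MonoidAlgebra F G) (n : N),
      a * (of F G n - 1) ∈ subgroupAugmentation F N * ⊤ by
    refine Submodule.mul_le.2 fun a _ b hb => ?_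
    induction hb using Submodule.span_induction with
    | mem _ hb => obtain ⟨n, rfl⟩ := hb; exact h a n
    | zero => rw [mul_zero]; exact zero_mem _
    | add x y _ _ hx hy => rw [mul_add]; exact add_mem hx hy
    | smul c x _ hx => rw [mul_smul_comm]; exact Submodule.smul_mem _ c hx
  intro a n
  induction a using MonoidAlgebra.induction_linear with
  | zero => rw [zero_mul]; exact zero_mem _
  | add a a' ha ha' => rw [add_mul]; exact add_mem ha ha'
  | single h c =>
    rw [single_eq_algebraMap_mul_of, mul_assoc, ← Algebra.smul_def, mul_sub, mul_one, ← map_mul]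
    exact Submodule.smul_mem _ c
      (of_sub_of_mem_subgroupAugmentation_mul_top (hN.conj_mem n n.2 h))

theorem sum_conjClass_sub_one_mem [Fintype G] [DecidableEq (ConjClasses G)] {p : ℕ}
    [Fact p.Prime] [CharP F p] (hG : IsPGroup p G) {N : Subgroup G} (hcomm : commutator G ≤ N)
    (hcenter : Subgroup.center G ≤ N) (r : G) :
    ∑ g with ConjClasses.mk g = ConjClasses.mk r, (of F G g - 1) ∈
      subgroupAugmentation F N * ⊤ := by
  set K := Finset.univ.filter fun g => ConjClasses.mk g = ConjClasses.mk r
  have hsplit : ∑ g ∈ K, (of F G g - 1) =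
      ∑ g ∈ K, (of F G g - of F G r) + (K.card : F) • (of F G r - 1) := by
    rw [Nat.cast_smul_eq_nsmul, ← Finset.sum_const, ← Finset.sum_add_distrib]
    simp only [sub_add_sub_cancel]
  rw [hsplit]
  refine add_mem
    (Submodule.sum_mem _ fun g hg => of_sub_of_mem_subgroupAugmentation_mul_top ?_) ?_
  · obtain ⟨c, rfl⟩ :=
      isConj_iff.1 (ConjClasses.mk_eq_mk_iff_isConj.1 (Finset.mem_filter.1 hg).2).symm
    rw [← commutatorElement_def]
    exact hcomm (Subgroup.commutator_mem_commutator (Subgroup.mem_top c) (Subgroup.mem_top r))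
  by_cases hr : r ∈ Subgroup.center G
  · refine Submodule.smul_mem _ _ ?_
    have := of_sub_of_mem_subgroupAugmentation_mul_top (F := F) (g := r) (h := 1)
      (by simpa using hcenter hr)
    rwa [map_one] at this
  · have hK : K.card = Nat.card (ConjClasses.mk r).carrier := by
      rw [← Fintype.card_subtype, ← Nat.card_eq_fintype_card]
      exact Nat.card_congr
        (Equiv.subtypeEquivRight fun g => ConjClasses.mem_carrier_iff_mk_eq.symm)
    rw [hK, (CharP.cast_eq_zero_iff F p _).2 (hG.prime_dvd_card_conjClass hr), zero_smul]
    exact zero_mem _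

theorem mem_subgroupAugmentation_mul_top_of_mem_center [Fintype G] {p : ℕ} [Fact p.Prime]
    [CharP F p] (hG : IsPGroup p G) {N : Subgroup G} (hcomm : commutator G ≤ N)
    (hcenter : Subgroup.center G ≤ N) {x : MonoidAlgebra F G}
    (hx : x ∈ Subalgebra.center F (MonoidAlgebra F G)) (hx0 : augmentation F G x = 0) :
    x ∈ subgroupAugmentation F N * ⊤ := by
  classical
  rw [← sub_zero x, ← map_zero (algebraMap F _), ← hx0, sub_algebraMap_augmentation_eq_sum,
    ← Finset.sum_fiberwise Finset.univ ConjClasses.mk]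
  refine Submodule.sum_mem _ fun K _ => ?_
  obtain ⟨r, rfl⟩ := ConjClasses.mk_surjective K
  rw [Finset.sum_congr rfl fun g hg => by
    rw [coeff_eq_of_isConj_of_mem_center hx
      (ConjClasses.mk_eq_mk_iff_isConj.1 (Finset.mem_filter.1 hg).2)], ← Finset.smul_sum]
  exact Submodule.smul_mem _ _ (sum_conjClass_sub_one_mem hG hcomm hcenter r)

theorem subgroupAugmentation_le_map_jacRad {p : ℕ} [Fact p.Prime] [CharP F p] [Finite G]
    (hG : IsPGroup p G) (N : Subgroup G) :
    subgroupAugmentation F N ≤ Submodule.map (mapDomainAlgHom F F N.subtype).toLinearMap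
      (jacRad F (MonoidAlgebra F N)) := by
  refine Submodule.span_le.2 ?_
  rintro _ ⟨n, rfl⟩
  refine ⟨of F N n - 1, of_sub_one_mem_jacobson (hG.to_subgroup N) n, ?_⟩
  simp only [AlgHom.toLinearMap_apply, map_sub, map_one]
  simp

end MonoidAlgebra

theorem jacobson_center_le_radical_of_derived_center_general (F : Type*) [Field F]
    (p : ℕ) [Fact p.Prime] [CharP F p]
    (P : Type*) [Group P] [Fintype P] (hP : IsPGroup p P)
    (N : Subgroup P) (hN : N = commutator P ⊔ Subgroup.center P) :
    Submodule.map (Subalgebra.center F (MonoidAlgebra F P)).val.toLinearMap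
        (jacRad F (Subalgebra.center F (MonoidAlgebra F P))) ≤
      Submodule.map (MonoidAlgebra.mapDomainAlgHom F F N.subtype).toLinearMap
          (jacRad F (MonoidAlgebra F N)) * (⊤ : Submodule F (MonoidAlgebra F P)) ∧
    LL F (Subalgebra.center F (MonoidAlgebra F P)) ≤ LL F (MonoidAlgebra F N) := by
  set Z := Subalgebra.center F (MonoidAlgebra F P)
  set φ := (MonoidAlgebra.mapDomainAlgHom F F N.subtype).toLinearMap
  set I := MonoidAlgebra.subgroupAugmentation F N
  have hJZ : Submodule.map Z.val.toLinearMap (jacRad F Z) ≤ I * ⊤ := by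
    rintro _ ⟨z, hz, rfl⟩
    exact MonoidAlgebra.mem_subgroupAugmentation_mul_top_of_mem_center hP
      (hN ▸ le_sup_left) (hN ▸ le_sup_right) z.2
      (((MonoidAlgebra.augmentation F P).comp Z.val).apply_eq_zero_of_mem_jacRad hz)
  have hI : I ≤ Submodule.map φ (jacRad F (MonoidAlgebra F N)) :=
    MonoidAlgebra.subgroupAugmentation_le_map_jacRad hP N
  have hIP : ⊤ * I ≤ I * ⊤ :=
    MonoidAlgebra.top_mul_subgroupAugmentation_le (hN ▸ Subgroup.sup_normal _ _)
  refine ⟨hJZ.trans (mul_le_mul' hI le_rfl), ?_⟩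
  obtain ⟨hl, hJN⟩ := LL_spec F (MonoidAlgebra F N)
  obtain ⟨k, hk⟩ := Nat.exists_eq_add_one_of_ne_zero hl.ne'
  refine Nat.sInf_le ⟨hl, Submodule.map_injective_of_injective
    (f := Z.val.toLinearMap) Subtype.val_injective ?_⟩
  rw [Submodule.map_bot, ← le_bot_iff]
  calc Submodule.map Z.val.toLinearMap (jacRad F Z ^ LL F (MonoidAlgebra F N))
      = Submodule.map Z.val.toLinearMap (jacRad F Z) ^ (k + 1) := by rw [Submodule.map_pow, hk]
    _ ≤ (I * ⊤) ^ (k + 1) := pow_le_pow_left' hJZ _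
    _ ≤ I ^ (k + 1) * ⊤ := Submodule.mul_top_pow_le (M := I) hIP k
    _ ≤ Submodule.map φ (jacRad F (MonoidAlgebra F N)) ^ (k + 1) * ⊤ :=
      mul_le_mul' (pow_le_pow_left' hI _) le_rfl
    _ = ⊥ := by rw [← Submodule.map_pow, ← hk, hJN, Submodule.map_bot, Submodule.bot_mul]

/-- For an algebraically closed field `F` of characteristic `p > 0` and a non-abelian finite
`p`-group `P`, with `N := P'Z(P)`, one has `J(Z(FP)) ⊆ J(FN)·FP`; consequently
`LL(Z(FP)) ≤ LL(FN)`. -/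
theorem jacobson_center_le_radical_of_derived_center (F : Type*) [Field F] [IsAlgClosed F]
    (p : ℕ) [Fact p.Prime] [CharP F p]
    (P : Type*) [Group P] [Fintype P] (hP : IsPGroup p P)
    (hnab : ¬ (∀ x y : P, x * y = y * x))
    (N : Subgroup P) (hN : N = commutator P ⊔ Subgroup.center P) :
    Submodule.map (Subalgebra.center F (MonoidAlgebra F P)).val.toLinearMap
        (jacRad F (Subalgebra.center F (MonoidAlgebra F P))) ≤
      Submodule.map (MonoidAlgebra.mapDomainAlgHom F F N.subtype).toLinearMap
          (jacRad F (MonoidAlgebra F N)) * (⊤ : Submodule F (MonoidAlgebra F P)) ∧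
    LL F (Subalgebra.center F (MonoidAlgebra F P)) ≤ LL F (MonoidAlgebra F N) :=
  jacobson_center_le_radical_of_derived_center_general F p P hP N hN
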